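/- arXiv:1602.00013 — 2 statements merged into one kernel-verified Lean document; each statement's English description precedes it below -/
import Mathlib

section
/- For any net (A_ε) of subsets of ℝ^n, the internal set [A_ε] is closed in the sharp topology on ρ-ℝ̃^n, and the strongly internal set ⟨A_ε⟩ is open in the sharp topology. -/
open Filter Topology Set Asymptotics

/-- `x` is a ρ-moderate net: `x_ε = O(ρ_ε^{-a})` as `ε → 0⁺` for some `a > 0`. -/
def RMod (ρ x : ℝ → ℝ) : Prop :=
  ∃ a : ℝ, 0 < a ∧ x =O[𝓝[>] (0:ℝ)] fun ε => ρ ε ^ (-a)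

/-- `x` is a ρ-negligible net: `x_ε = O(ρ_ε^{a})` as `ε → 0⁺` for every `a > 0`. -/
def RNegl (ρ x : ℝ → ℝ) : Prop :=
  ∀ a : ℝ, 0 < a → x =O[𝓝[>] (0:ℝ)] fun ε => ρ ε ^ a

/-- The order relation of `ρ-ℝ̃` at the level of representatives:
`x ≤ y` iff `x_ε ≤ y_ε + z_ε` for `ε` small, for some ρ-negligible net `z`. -/
def RLe (ρ x y : ℝ → ℝ) : Prop :=
  ∃ z : ℝ → ℝ, RNegl ρ z ∧ ∀ᶠ ε in 𝓝[>] (0:ℝ), x ε ≤ y ε + z ε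

/-- Invertibility in `ρ-ℝ̃` at the level of representatives. -/
def RInv (ρ x : ℝ → ℝ) : Prop :=
  ∃ y : ℝ → ℝ, RMod ρ y ∧ RNegl ρ (x * y - 1)

/-- Strict order `x < y` of `ρ-ℝ̃`: some nonnegative invertible `r` satisfies `r ≤ y - x`. -/
def RLt (ρ x y : ℝ → ℝ) : Prop :=
  ∃ r : ℝ → ℝ, RMod ρ r ∧ RInv ρ r ∧ RLe ρ 0 r ∧ RLe ρ r (y - x)

/-- A ρ-moderate net of points of `ℝ^n`. -/
def VMod (n : ℕ) (ρ : ℝ → ℝ) (x : ℝ → EuclideanSpace ℝ (Fin n)) : Prop :=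
  ∃ a : ℝ, 0 < a ∧ (fun ε => ‖x ε‖) =O[𝓝[>] (0:ℝ)] fun ε => ρ ε ^ (-a)

/-- A ρ-negligible net of points of `ℝ^n`. -/
def VNegl (n : ℕ) (ρ : ℝ → ℝ) (x : ℝ → EuclideanSpace ℝ (Fin n)) : Prop :=
  ∀ a : ℝ, 0 < a → (fun ε => ‖x ε‖) =O[𝓝[>] (0:ℝ)] fun ε => ρ ε ^ a

/-- `[x_ε] ∈ [A_ε]`: membership in the internal set generated by `(A_ε)`, i.e. some
representative of the class of `x` belongs to `A_ε` for `ε` small. -/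
def IntMem (n : ℕ) (ρ : ℝ → ℝ) (x : ℝ → EuclideanSpace ℝ (Fin n))
    (A : ℝ → Set (EuclideanSpace ℝ (Fin n))) : Prop :=
  ∃ x' : ℝ → EuclideanSpace ℝ (Fin n),
    VNegl n ρ (fun ε => x ε - x' ε) ∧ ∀ᶠ ε in 𝓝[>] (0:ℝ), x' ε ∈ A ε

/-- `(x_ε)` strongly belongs to `(A_ε)`, i.e. `[x_ε] ∈ ⟨A_ε⟩`: every representative of the
class of `x` belongs to `A_ε` for `ε` small. -/
def SBel (n : ℕ) (ρ : ℝ → ℝ) (x : ℝ → EuclideanSpace ℝ (Fin n))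
    (A : ℝ → Set (EuclideanSpace ℝ (Fin n))) : Prop :=
  ∀ x' : ℝ → EuclideanSpace ℝ (Fin n),
    VNegl n ρ (fun ε => x ε - x' ε) → ∀ᶠ ε in 𝓝[>] (0:ℝ), x' ε ∈ A ε

/-- A set of (classes of) points of `ρ-ℝ̃^n` is sharply open if around each of its points it
contains a ball `B_r(x)` of positive invertible radius `r`. -/
def SharplyOpen (n : ℕ) (ρ : ℝ → ℝ)
    (S : Set {x : ℝ → EuclideanSpace ℝ (Fin n) // VMod n ρ x}) : Prop :=
  ∀ x ∈ S, ∃ r : ℝ → ℝ, RMod ρ r ∧ RLe ρ 0 r ∧ RInv ρ r ∧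
    ∀ y : {x : ℝ → EuclideanSpace ℝ (Fin n) // VMod n ρ x},
      RLt ρ (fun ε => ‖y.1 ε - x.1 ε‖) r → y ∈ S

/-! A sharp ball of radius `ρ^a` around `[x]` only contains points `[y]` with
`‖y_ε - x_ε‖ + ρ_ε^c ≤ ρ_ε^a` for some `c > 0`, so every representative of `[y]` stays within
`ρ_ε^a` of `x_ε`. If `[x] ∉ [A_ε]`, then `x_ε` keeps distance `> ρ_ε^a` from `A_ε` for some `a`
along some `ε → 0`: otherwise nearly nearest points of `A_ε` form a representative of `[x]`
in `A_ε`. Dually, if `[x] ∈ ⟨A_ε⟩`, then `A_ε` contains the closed `ρ_ε^a`-ball around `x_ε`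
for some `a` and all small `ε`: otherwise moving `x_{ε_k}` to a point outside `A_{ε_k}` at
distance `ρ^(k+1)`, along a sequence `ε_k → 0`, gives a representative of `[x]` outside `A_ε`.
-/

lemma exists_seq_tendsto_forall_of_frequently {α : Type*} {l : Filter α} [l.IsCountablyGenerated]
    {Q : ℕ → α → Prop} (h : ∀ k, ∃ᶠ x in l, Q k x) :
    ∃ e : ℕ → α, Tendsto e atTop l ∧ ∀ k, Q k (e k) := by
  obtain ⟨s, hs⟩ := l.exists_antitone_basis
  choose e he using fun k => ((h k).and_eventually (hs.mem k)).exists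
  exact ⟨e, hs.tendsto fun k => (he k).2, fun k => (he k).1⟩

section Asymptotics

variable {ρ : ℝ → ℝ}

lemma eventually_pos_and_lt_one (hρ : Tendsto ρ (𝓝[>] 0) (𝓝[>] 0)) :
    ∀ᶠ ε in 𝓝[>] 0, 0 < ρ ε ∧ ρ ε < 1 :=
  hρ (Ioo_mem_nhdsGT one_pos)

lemma isLittleO_rpow_add_one (hρ : Tendsto ρ (𝓝[>] 0) (𝓝[>] 0)) (b : ℝ) :
    (fun ε => ρ ε ^ (b + 1)) =o[𝓝[>] 0] fun ε => ρ ε ^ b := by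
  have h : ρ =o[𝓝[>] 0] fun _ => (1:ℝ) :=
    (isLittleO_one_iff ℝ).2 (tendsto_nhdsWithin_iff.1 hρ).1
  refine ((h.mul_isBigO (isBigO_refl (fun ε => ρ ε ^ b) _)).congr' ?_ ?_)
  · filter_upwards [eventually_pos_and_lt_one hρ] with ε hε
    rw [Real.rpow_add_one hε.1.ne', mul_comm]
  · simp only [one_mul, EventuallyEq.rfl]

lemma RNegl.isLittleO_rpow {z : ℝ → ℝ} (hz : RNegl ρ z) (hρ : Tendsto ρ (𝓝[>] 0) (𝓝[>] 0))
    {b : ℝ} (hb : 0 < b) : z =o[𝓝[>] 0] fun ε => ρ ε ^ b :=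
  (hz (b + 1) (by linarith)).trans_isLittleO (isLittleO_rpow_add_one hρ b)

lemma RNegl.eventually_abs_le_rpow {z : ℝ → ℝ} (hz : RNegl ρ z)
    (hρ : Tendsto ρ (𝓝[>] 0) (𝓝[>] 0)) {b : ℝ} (hb : 0 < b) :
    ∀ᶠ ε in 𝓝[>] 0, |z ε| ≤ ρ ε ^ b := by
  filter_upwards [(hz.isLittleO_rpow hρ hb).bound one_pos, eventually_pos_and_lt_one hρ]
    with ε hε hρε
  rwa [Real.norm_eq_abs, Real.norm_eq_abs, one_mul,
    abs_of_pos (Real.rpow_pos_of_pos hρε.1 b)] at hε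

lemma RNegl.tendsto_zero {z : ℝ → ℝ} (hz : RNegl ρ z) (hρ : Tendsto ρ (𝓝[>] 0) (𝓝[>] 0)) :
    Tendsto z (𝓝[>] 0) (𝓝 0) :=
  (hz 1 one_pos).trans_tendsto (by simpa using (tendsto_nhdsWithin_iff.1 hρ).1)

lemma RInv.rpow_isBigO {s : ℝ → ℝ} (hs : RInv ρ s) (hρ : Tendsto ρ (𝓝[>] 0) (𝓝[>] 0)) :
    ∃ m : ℝ, 0 < m ∧ (fun ε => ρ ε ^ m) =O[𝓝[>] 0] s := by
  obtain ⟨t, ⟨m, hm, ht⟩, hst⟩ := hs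
  have hst1 : (fun _ => (1:ℝ)) =O[𝓝[>] 0] fun ε => s ε * t ε := by
    have hlim : Tendsto (fun ε => ‖s ε * t ε‖) (𝓝[>] 0) (𝓝 1) := by
      simpa using ((hst.tendsto_zero hρ).add_const 1).norm
    exact (isBigO_const_left_iff_pos_le_norm one_ne_zero).2
      ⟨1 / 2, by norm_num, hlim.eventually (eventually_ge_nhds (by norm_num))⟩
  have hρt : (fun ε => ρ ε ^ m * t ε) =O[𝓝[>] 0] fun _ => (1:ℝ) := by
    refine ((isBigO_refl (fun ε => ρ ε ^ m) _).mul ht).congr' EventuallyEq.rfl ?_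
    filter_upwards [eventually_pos_and_lt_one hρ] with ε hε
    rw [← Real.rpow_add hε.1, add_neg_cancel, Real.rpow_zero]
  refine ⟨m, hm, ?_⟩
  calc (fun ε => ρ ε ^ m) = fun ε => ρ ε ^ m * 1 := by simp
    _ =O[𝓝[>] 0] fun ε => ρ ε ^ m * (s ε * t ε) :=
      (isBigO_refl _ _).mul hst1
    _ = fun ε => s ε * (ρ ε ^ m * t ε) := by ext ε; ring
    _ =O[𝓝[>] 0] fun ε => s ε * 1 := (isBigO_refl s _).mul hρt
    _ = s := by simp

lemma RLt.exists_rpow_add_le {u r : ℝ → ℝ} (h : RLt ρ u r) (hρ : Tendsto ρ (𝓝[>] 0) (𝓝[>] 0)) :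
    ∃ c : ℝ, 0 < c ∧ ∀ᶠ ε in 𝓝[>] 0, u ε + ρ ε ^ c ≤ r ε := by
  obtain ⟨s, -, hs, ⟨z₁, hz₁, h₁⟩, ⟨z₂, hz₂, h₂⟩⟩ := h
  obtain ⟨m, hm, hsO⟩ := hs.rpow_isBigO hρ
  have third : (0:ℝ) < 1 / 3 := by norm_num
  refine ⟨m + 1, by linarith, ?_⟩
  filter_upwards [((isLittleO_rpow_add_one hρ m).trans_isBigO hsO).bound third,
    ((hz₁.isLittleO_rpow hρ hm).trans_isBigO hsO).bound third,
    ((hz₂.isLittleO_rpow hρ hm).trans_isBigO hsO).bound third,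
    h₁, h₂, eventually_pos_and_lt_one hρ] with ε e₀ e₁ e₂ h₁ h₂ hρε
  simp only [Real.norm_eq_abs, Pi.zero_apply, Pi.sub_apply] at e₀ e₁ e₂ h₁ h₂
  have hpos := Real.rpow_pos_of_pos hρε.1 (m + 1)
  rw [abs_of_pos hpos] at e₀
  cases abs_cases (s ε) <;> cases abs_cases (z₁ ε) <;> cases abs_cases (z₂ ε) <;> linarith

lemma rMod_and_rLe_and_rInv_rpow (hρ : Tendsto ρ (𝓝[>] 0) (𝓝[>] 0)) {a : ℝ} (ha : 0 < a) :
    RMod ρ (fun ε => ρ ε ^ a) ∧ RLe ρ 0 (fun ε => ρ ε ^ a) ∧ RInv ρ (fun ε => ρ ε ^ a) := by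
  have hρ' := eventually_pos_and_lt_one hρ
  refine ⟨⟨a, ha, IsBigO.of_bound 1 ?_⟩, ⟨0, fun _ _ => isBigO_zero _ _, ?_⟩,
    ⟨fun ε => ρ ε ^ (-a), ⟨a, ha, isBigO_refl _ _⟩, fun _ _ => ?_⟩⟩
  · filter_upwards [hρ'] with ε hε
    rw [Real.norm_of_nonneg (Real.rpow_nonneg hε.1.le _),
      Real.norm_of_nonneg (Real.rpow_nonneg hε.1.le _), one_mul]
    exact Real.rpow_le_rpow_of_exponent_ge hε.1 hε.2.le (by linarith)
  · filter_upwards [hρ'] with ε hε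
    simpa using Real.rpow_nonneg hε.1.le a
  · refine (isBigO_zero _ _).congr' ?_ EventuallyEq.rfl
    filter_upwards [hρ'] with ε hε
    simp [← Real.rpow_add hε.1]

lemma eventually_rpow_inv_le (hρ : Tendsto ρ (𝓝[>] 0) (𝓝[>] 0)) {a : ℝ} (ha : 0 < a) :
    ∀ᶠ ε in 𝓝[>] 0, ρ ε ^ ε⁻¹ ≤ ρ ε ^ a := by
  filter_upwards [Ioo_mem_nhdsGT (inv_pos.2 ha), eventually_pos_and_lt_one hρ] with ε hε hρε
  exact Real.rpow_le_rpow_of_exponent_ge hρε.1 hρε.2.le ((lt_inv_comm₀ hε.1 ha).1 hε.2).le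

end Asymptotics

section Sharp

variable {n : ℕ} {ρ : ℝ → ℝ} {A : ℝ → Set (EuclideanSpace ℝ (Fin n))}

lemma intMem_of_forall_eventually_exists_dist_le (hρ : Tendsto ρ (𝓝[>] 0) (𝓝[>] 0))
    {x : ℝ → EuclideanSpace ℝ (Fin n)}
    (H : ∀ a : ℝ, 0 < a → ∀ᶠ ε in 𝓝[>] 0, ∃ z ∈ A ε, dist (x ε) z ≤ ρ ε ^ a) :
    IntMem n ρ x A := by
  -- The slack `ρ ε ^ ε⁻¹` is positive and negligible; `Classical.epsilon` is junk where `A ε = ∅`.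
  set x' : ℝ → EuclideanSpace ℝ (Fin n) := fun ε => Classical.epsilon fun z =>
    z ∈ A ε ∧ dist (x ε) z < Metric.infDist (x ε) (A ε) + ρ ε ^ ε⁻¹
  have key : ∀ a : ℝ, 0 < a →
      ∀ᶠ ε in 𝓝[>] 0, x' ε ∈ A ε ∧ dist (x ε) (x' ε) ≤ 2 * ρ ε ^ a := by
    intro a ha
    filter_upwards [H a ha, eventually_rpow_inv_le hρ ha, eventually_pos_and_lt_one hρ]
      with ε ⟨w, hwA, hw⟩ hslack hρε
    have hinf : Metric.infDist (x ε) (A ε) ≤ ρ ε ^ a :=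
      (Metric.infDist_le_dist_of_mem hwA).trans hw
    obtain ⟨hA, hlt⟩ : x' ε ∈ A ε ∧ dist (x ε) (x' ε) < _ :=
      Classical.epsilon_spec ((Metric.infDist_lt_iff ⟨w, hwA⟩).1
        (lt_add_of_pos_right _ (Real.rpow_pos_of_pos hρε.1 ε⁻¹)))
    exact ⟨hA, by linarith⟩
  refine ⟨x', fun a ha => IsBigO.of_bound 2 ?_, (key 1 one_pos).mono fun ε h => h.1⟩
  filter_upwards [key a ha, eventually_pos_and_lt_one hρ] with ε h hρε
  rw [← dist_eq_norm, Real.norm_of_nonneg dist_nonneg,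
    Real.norm_of_nonneg (Real.rpow_nonneg hρε.1.le a)]
  exact h.2

lemma vNegl_sub_of_dist_le_rpow_on_seq (hρ : Tendsto ρ (𝓝[>] 0) (𝓝[>] 0))
    {e : ℕ → ℝ} (he : ∀ k, 0 < e k) {x x' : ℝ → EuclideanSpace ℝ (Fin n)}
    (hx' : ∀ ε, x' ε = x ε ∨ ∃ k : ℕ, e k = ε ∧ dist (x ε) (x' ε) ≤ ρ ε ^ ((k:ℝ) + 1)) :
    VNegl n ρ (fun ε => x ε - x' ε) := by
  intro a ha
  refine IsBigO.of_bound 1 ?_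
  have hfar : ∀ᶠ ε in 𝓝[>] 0, ∀ k ∈ Finset.range ⌈a⌉₊, ε ≠ e k :=
    (eventually_all_finset _).2 fun k _ =>
      eventually_of_mem (Ioo_mem_nhdsGT (he k)) fun ε hε => hε.2.ne
  filter_upwards [hfar, eventually_pos_and_lt_one hρ] with ε hε hρε
  rw [← dist_eq_norm, Real.norm_of_nonneg dist_nonneg,
    Real.norm_of_nonneg (Real.rpow_nonneg hρε.1.le a), one_mul]
  rcases hx' ε with h | ⟨k, rfl, hk⟩
  · simpa [h] using Real.rpow_nonneg hρε.1.le a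
  · have hak : ⌈a⌉₊ ≤ k := by
      by_contra! hlt
      exact hε k (Finset.mem_range.2 hlt) rfl
    refine hk.trans (Real.rpow_le_rpow_of_exponent_ge hρε.1 hρε.2.le ?_)
    linarith [Nat.le_ceil a, (Nat.cast_le (α := ℝ)).2 hak]

lemma SBel.exists_rpow_ball_subset (hρ : Tendsto ρ (𝓝[>] 0) (𝓝[>] 0))
    {x : ℝ → EuclideanSpace ℝ (Fin n)} (hx : SBel n ρ x A) :
    ∃ a : ℝ, 0 < a ∧ ∀ᶠ ε in 𝓝[>] 0, ∀ z, dist (x ε) z ≤ ρ ε ^ a → z ∈ A ε := by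
  classical
  by_contra! hcon
  obtain ⟨e, he, hbad⟩ := exists_seq_tendsto_forall_of_frequently fun k : ℕ =>
    (hcon (k + 1) (by positivity)).and_eventually self_mem_nhdsWithin
  choose p hp using fun k => (hbad k).1
  set x' : ℝ → EuclideanSpace ℝ (Fin n) := fun ε =>
    if h : ∃ k, e k = ε then p h.choose else x ε
  have hnegl : VNegl n ρ (fun ε => x ε - x' ε) := by
    refine vNegl_sub_of_dist_le_rpow_on_seq hρ (fun k => (hbad k).2) fun ε => ?_
    by_cases h : ∃ k, e k = ε
    · have hpk := (hp h.choose).1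
      rw [h.choose_spec] at hpk
      exact .inr ⟨h.choose, h.choose_spec, by simpa only [x', dif_pos h] using hpk⟩
    · exact .inl (dif_neg h)
  obtain ⟨k, hk⟩ := (he.eventually (hx x' hnegl)).exists
  have h : ∃ j, e j = e k := ⟨k, rfl⟩
  have hx'k : x' (e k) = p h.choose := dif_pos h
  have hpk := (hp h.choose).2
  rw [h.choose_spec] at hpk
  exact hpk (hx'k ▸ hk)

lemma eventually_dist_le_of_rlt (hρ : Tendsto ρ (𝓝[>] 0) (𝓝[>] 0))
    {x y y' : ℝ → EuclideanSpace ℝ (Fin n)} {r : ℝ → ℝ}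
    (hy : RLt ρ (fun ε => ‖y ε - x ε‖) r) (hy' : VNegl n ρ fun ε => y ε - y' ε) :
    ∀ᶠ ε in 𝓝[>] 0, dist (x ε) (y' ε) ≤ r ε := by
  obtain ⟨c, hc, hgap⟩ := hy.exists_rpow_add_le hρ
  have hy'' : RNegl ρ fun ε => ‖y ε - y' ε‖ := hy'
  filter_upwards [hgap, hy''.eventually_abs_le_rpow hρ hc] with ε h₁ h₂
  rw [abs_of_nonneg (norm_nonneg _)] at h₂
  calc dist (x ε) (y' ε) ≤ dist (x ε) (y ε) + dist (y ε) (y' ε) := dist_triangle _ _ _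
    _ = ‖y ε - x ε‖ + ‖y ε - y' ε‖ := by rw [dist_comm, dist_eq_norm, dist_eq_norm]
    _ ≤ r ε := by linarith

theorem sharplyOpen_compl_intMem (hρ : Tendsto ρ (𝓝[>] 0) (𝓝[>] 0))
    (A : ℝ → Set (EuclideanSpace ℝ (Fin n))) :
    SharplyOpen n ρ {x | ¬ IntMem n ρ x.1 A} := by
  intro x hx
  obtain ⟨a, ha, hfar⟩ :
      ∃ a : ℝ, 0 < a ∧ ∃ᶠ ε in 𝓝[>] 0, ∀ z ∈ A ε, ρ ε ^ a < dist (x.1 ε) z := by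
    by_contra! h
    exact hx (intMem_of_forall_eventually_exists_dist_le hρ h)
  obtain ⟨hmod, hnn, hinv⟩ := rMod_and_rLe_and_rInv_rpow hρ ha
  refine ⟨_, hmod, hnn, hinv, fun y hy ⟨y', hy', hy'A⟩ => ?_⟩
  obtain ⟨ε, hε, hdist, hA⟩ :=
    (hfar.and_eventually ((eventually_dist_le_of_rlt hρ hy hy').and hy'A)).exists
  exact (hdist.trans_lt (hε _ hA)).false

theorem sharplyOpen_sBel (hρ : Tendsto ρ (𝓝[>] 0) (𝓝[>] 0))
    (A : ℝ → Set (EuclideanSpace ℝ (Fin n))) :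
    SharplyOpen n ρ {x | SBel n ρ x.1 A} := by
  intro x hx
  obtain ⟨a, ha, hball⟩ := SBel.exists_rpow_ball_subset hρ hx
  obtain ⟨hmod, hnn, hinv⟩ := rMod_and_rLe_and_rInv_rpow hρ ha
  refine ⟨_, hmod, hnn, hinv, fun y hy y' hy' => ?_⟩
  filter_upwards [hball, eventually_dist_le_of_rlt hρ hy hy'] with ε h hd using h _ hd

end Sharp

/-- For any net `(A_ε)` of subsets of `ℝ^n`, the internal set `[A_ε]` is
sharply closed (its complement is sharply open) and the strongly internal set `⟨A_ε⟩` is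
sharply open. -/
theorem internal_closed_strongly_internal_open (n : ℕ) (ρ : ℝ → ℝ)
    (hρpos : ∀ ε ∈ Set.Ioc (0:ℝ) 1, 0 < ρ ε)
    (hρ0 : Tendsto ρ (𝓝[>] (0:ℝ)) (𝓝 0))
    (A : ℝ → Set (EuclideanSpace ℝ (Fin n))) :
    SharplyOpen n ρ {x | ¬ IntMem n ρ x.1 A} ∧
    SharplyOpen n ρ {x | SBel n ρ x.1 A} := by
  have hρ : Tendsto ρ (𝓝[>] 0) (𝓝[>] 0) :=
    tendsto_nhdsWithin_iff.2 ⟨hρ0, eventually_of_mem (Ioc_mem_nhdsGT one_pos) hρpos⟩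
  exact ⟨sharplyOpen_compl_intMem hρ A, sharplyOpen_sBel hρ A⟩
end

section
/- Let A be an n×n matrix over ρ-ℝ̃. The following are equivalent: (1) A is nondegenerate, i.e. ξᵗAη = 0 for all η ∈ ρ-ℝ̃^n implies ξ = 0; (2) the linear map A : ρ-ℝ̃^n → ρ-ℝ̃^n is injective; (3) A : ρ-ℝ̃^n → ρ-ℝ̃^n is surjective; (4) det(A) is invertible in ρ-ℝ̃. -/
open Filter Topology Set Asymptotics

/-- A vector of ρ-moderate nets, i.e. a representative of an element of `ρ-ℝ̃^n`. -/
def VecMod (n : ℕ) (ρ : ℝ → ℝ) (ξ : Fin n → ℝ → ℝ) : Prop :=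
  ∀ i, RMod ρ (ξ i)

/-- A vector of ρ-negligible nets, i.e. a representative of `0 ∈ ρ-ℝ̃^n`. -/
def VecNegl (n : ℕ) (ρ : ℝ → ℝ) (ξ : Fin n → ℝ → ℝ) : Prop :=
  ∀ i, RNegl ρ (ξ i)

/-!
Over the ring `ρ-ℝ̃` of moderate nets modulo negligible nets, the four conditions say that `A` is
left-separating, that `A *ᵥ ·` is injective, that it is surjective, and that `det A` is a unit.
Surjectivity is equivalent to a unit determinant over every commutative ring, and a unit
determinant makes `A` nondegenerate. What is special to `ρ-ℝ̃` is the converse. If `det A` is not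
invertible, then `|det A(ε)| < ρ(ε)^k` along a sequence `ε_k → 0`. A small determinant forces
`|A(ε_k) v_k| < ρ(ε_k)^k` for some sup-norm unit vector `v_k` (compare `|det A⁻¹|` with the
entries of `A⁻¹`), so the net equal to `v_k` at `ε_k` and to `0` elsewhere is a nonzero vector
killed by `A`. Applied to `Aᵀ`, this handles nondegeneracy as well.
-/

open Matrix
open scoped Nat

section RealMatrix

variable {ι : Type*} [Fintype ι] [DecidableEq ι]

theorem pow_card_le_factorial_mul_abs_det (M : Matrix ι ι ℝ) {s : ℝ} (hs : 0 < s)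
    (hM : ∀ v, s * ‖v‖ ≤ ‖M *ᵥ v‖) : s ^ Fintype.card ι ≤ (Fintype.card ι)! * |M.det| := by
  have hinj : Function.Injective M.mulVec := fun v w hvw => by
    have := hM (v - w)
    rw [mulVec_sub, hvw, sub_self, norm_zero] at this
    exact sub_eq_zero.1 (norm_le_zero_iff.1 (nonpos_of_mul_nonpos_right this hs))
  have hdet : IsUnit M.det := (isUnit_iff_isUnit_det M).1 (mulVec_injective_iff_isUnit.1 hinj)
  have hinv : ∀ i j, |M⁻¹ i j| ≤ s⁻¹ := fun i j => by
    have hcol := hM (M⁻¹ *ᵥ Pi.single j 1)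
    rw [mulVec_mulVec, mul_nonsing_inv M hdet, one_mulVec, Pi.norm_single, norm_one,
      mulVec_single_one] at hcol
    calc |M⁻¹ i j| ≤ ‖M⁻¹.col j‖ := norm_le_pi_norm (M⁻¹.col j) i
      _ ≤ s⁻¹ := by rwa [← one_div s, le_div_iff₀' hs]
  have := det_le (abv := AbsoluteValue.abs) hinv
  rw [det_nonsing_inv, Ring.inverse_eq_inv', AbsoluteValue.abs_apply, abs_inv, nsmul_eq_mul,
    inv_pow] at this
  have hd : 0 < |M.det| := abs_pos.2 hdet.ne_zero
  rwa [inv_le_iff_one_le_mul₀' hd, ← mul_assoc, le_mul_inv_iff₀ (pow_pos hs _), one_mul,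
    mul_comm] at this

theorem exists_norm_eq_one_norm_mulVec_lt (M : Matrix ι ι ℝ) {s : ℝ} (hs : 0 < s)
    (h : (Fintype.card ι)! * |M.det| < s ^ Fintype.card ι) :
    ∃ v : ι → ℝ, ‖v‖ = 1 ∧ ‖M *ᵥ v‖ < s := by
  by_contra! hM
  refine h.not_ge (pow_card_le_factorial_mul_abs_det M hs fun v => ?_)
  rcases eq_or_ne v 0 with rfl | hv
  · simp
  have hnv : 0 < ‖v‖ := norm_pos_iff.2 hv
  have := hM (‖v‖⁻¹ • v) (by rw [norm_smul, norm_inv, norm_norm, inv_mul_cancel₀ hnv.ne'])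
  rw [mulVec_smul, norm_smul, norm_inv, norm_norm] at this
  rwa [le_inv_mul_iff₀ hnv, mul_comm] at this

end RealMatrix

theorem exists_seq_tendsto_nhdsGT_forall_of_frequently {P : ℕ → ℝ → Prop}
    (h : ∀ k, ∃ᶠ ε in 𝓝[>] (0:ℝ), P k ε) :
    ∃ t : ℕ → ℝ, (∀ k, 0 < t k) ∧ Tendsto t atTop (𝓝[>] 0) ∧ ∀ k, P k (t k) := by
  have : ∀ k : ℕ, ∃ ε, P k ε ∧ ε ∈ Ioo (0:ℝ) (1 / ((k:ℝ) + 1)) := fun k =>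
    ((h k).and_eventually (Ioo_mem_nhdsGT (by positivity))).exists
  choose t hP ht using this
  refine ⟨t, fun k => (ht k).1, tendsto_nhdsWithin_iff.2 ⟨?_, .of_forall fun k => (ht k).1⟩, hP⟩
  exact tendsto_of_tendsto_of_tendsto_of_le_of_le tendsto_const_nhds
    tendsto_one_div_add_atTop_nhds_zero_nat (fun k => (ht k).1.le) (fun k => (ht k).2.le)

section Nets

variable {ρ : ℝ → ℝ}

theorem RMod.zero : RMod ρ 0 := ⟨1, one_pos, isBigO_zero _ _⟩

theorem RMod.neg {x : ℝ → ℝ} (hx : RMod ρ x) : RMod ρ (-x) :=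
  let ⟨a, ha, hxa⟩ := hx
  ⟨a, ha, hxa.neg_left⟩

theorem RNegl.zero : RNegl ρ 0 := fun _ _ => isBigO_zero _ _

theorem RNegl.add {x y : ℝ → ℝ} (hx : RNegl ρ x) (hy : RNegl ρ y) : RNegl ρ (x + y) :=
  fun a ha => (hx a ha).add (hy a ha)

theorem RNegl.tendsto_zero_s13 (hρ0 : Tendsto ρ (𝓝[>] 0) (𝓝 0)) {x : ℝ → ℝ} (hx : RNegl ρ x) :
    Tendsto x (𝓝[>] 0) (𝓝 0) :=
  (hx 1 one_pos).trans_tendsto (by simpa using hρ0)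

theorem not_forall_rNegl_of_norm_eq_one {ι : Type*} [Fintype ι]
    (hρ0 : Tendsto ρ (𝓝[>] 0) (𝓝 0)) {ξ : ℝ → ι → ℝ} {t : ℕ → ℝ}
    (ht : Tendsto t atTop (𝓝[>] 0)) (h : ∀ k, ‖ξ (t k)‖ = 1) :
    ¬ ∀ i, RNegl ρ fun ε => ξ ε i := by
  intro hξ
  have := ((tendsto_pi_nhds.2 fun i => (hξ i).tendsto_zero_s13 hρ0).comp ht).norm
  simp [h, ← Pi.zero_def] at this

variable (hρ : ∀ᶠ ε in 𝓝[>] (0:ℝ), ρ ε ∈ Ioc 0 1)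
include hρ

theorem rpow_isBigO_rpow {b c : ℝ} (h : b ≤ c) :
    (fun ε => ρ ε ^ c) =O[𝓝[>] (0:ℝ)] fun ε => ρ ε ^ b := by
  refine IsBigO.of_bound 1 ?_
  filter_upwards [hρ] with ε ⟨hpos, hle⟩
  rw [one_mul, Real.norm_of_nonneg (by positivity), Real.norm_of_nonneg (by positivity)]
  exact Real.rpow_le_rpow_of_exponent_ge hpos hle h

theorem rpow_mul_rpow_eventuallyEq (b c : ℝ) :
    (fun ε => ρ ε ^ b * ρ ε ^ c) =ᶠ[𝓝[>] (0:ℝ)] fun ε => ρ ε ^ (b + c) := by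
  filter_upwards [hρ] with ε hε using (Real.rpow_add hε.1 b c).symm

theorem RMod.of_bounded {x : ℝ → ℝ} {C : ℝ} (h : ∀ ε, |x ε| ≤ C) : RMod ρ x := by
  have hx : x =O[𝓝[>] (0:ℝ)] fun ε => ρ ε ^ (0:ℝ) :=
    IsBigO.of_bound C (.of_forall fun ε => by simpa using h ε)
  exact ⟨1, one_pos, hx.trans (rpow_isBigO_rpow hρ (by norm_num))⟩

theorem RMod.add {x y : ℝ → ℝ} (hx : RMod ρ x) (hy : RMod ρ y) : RMod ρ (x + y) := by
  obtain ⟨a, ha, hxa⟩ := hx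
  obtain ⟨b, -, hyb⟩ := hy
  exact ⟨max a b, lt_max_of_lt_left ha,
    (hxa.trans (rpow_isBigO_rpow hρ (by simp))).add (hyb.trans (rpow_isBigO_rpow hρ (by simp)))⟩

theorem RMod.mul {x y : ℝ → ℝ} (hx : RMod ρ x) (hy : RMod ρ y) : RMod ρ (x * y) := by
  obtain ⟨a, ha, hxa⟩ := hx
  obtain ⟨b, hb, hyb⟩ := hy
  refine ⟨a + b, by positivity, (hxa.mul hyb).trans_eventuallyEq ?_⟩
  filter_upwards [rpow_mul_rpow_eventuallyEq hρ (-a) (-b)] with ε hε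
  rw [hε, neg_add]

theorem RMod.mul_rNegl {x y : ℝ → ℝ} (hx : RMod ρ x) (hy : RNegl ρ y) : RNegl ρ (x * y) := by
  obtain ⟨a, ha, hxa⟩ := hx
  intro b hb
  refine (hxa.mul (hy (a + b) (by positivity))).trans_eventuallyEq ?_
  simpa using rpow_mul_rpow_eventuallyEq hρ (-a) (a + b)

theorem RNegl.of_forall_nat {x : ℝ → ℝ} (h : ∀ K : ℕ, ∀ᶠ ε in 𝓝[>] (0:ℝ), |x ε| ≤ ρ ε ^ K) :
    RNegl ρ x := by
  intro a _
  refine IsBigO.trans ?_ (rpow_isBigO_rpow hρ (Nat.le_ceil a))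
  refine IsBigO.of_bound 1 ?_
  filter_upwards [h ⌈a⌉₊, hρ] with ε hε hρε
  rwa [one_mul, Real.norm_eq_abs, Real.rpow_natCast, Real.norm_of_nonneg (pow_nonneg hρε.1.le _)]

theorem frequently_abs_lt_rpow_of_not_rInv {x : ℝ → ℝ} (hx : ¬ RInv ρ x) {b : ℝ} (hb : 0 < b) :
    ∃ᶠ ε in 𝓝[>] (0:ℝ), |x ε| < ρ ε ^ b := by
  by_contra! hev
  have hne : ∀ᶠ ε in 𝓝[>] (0:ℝ), x ε ≠ 0 := by
    filter_upwards [hev, hρ] with ε hε hρε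
    exact abs_pos.1 ((Real.rpow_pos_of_pos hρε.1 b).trans_le hε)
  refine hx ⟨x⁻¹, ⟨b, hb, IsBigO.of_bound 1 ?_⟩, fun a _ => ?_⟩
  · filter_upwards [hev, hρ] with ε hε hρε
    rw [one_mul, Pi.inv_apply, norm_inv, Real.norm_eq_abs,
      Real.norm_of_nonneg (Real.rpow_pos_of_pos hρε.1 _).le, Real.rpow_neg hρε.1.le]
    exact inv_anti₀ (Real.rpow_pos_of_pos hρε.1 b) hε
  · refine (isBigO_zero _ _).congr' ?_ EventuallyEq.rfl
    filter_upwards [hne] with ε hε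
    simp [hε]

theorem frequently_mul_abs_lt_pow_of_not_rInv (hρ0 : Tendsto ρ (𝓝[>] 0) (𝓝 0)) {x : ℝ → ℝ}
    (hx : ¬ RInv ρ x) (C : ℝ) (m : ℕ) :
    ∃ᶠ ε in 𝓝[>] (0:ℝ), ρ ε ∈ Ioc 0 1 ∧ C * |x ε| < ρ ε ^ m := by
  have hsmall : ∀ᶠ ε in 𝓝[>] (0:ℝ), |C| * ρ ε < 1 :=
    (hρ0.const_mul _).eventually_lt_const (by simp)
  have hfreq := frequently_abs_lt_rpow_of_not_rInv hρ hx (b := (m + 1 : ℕ)) (by positivity)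
  refine (hfreq.and_eventually (hρ.and hsmall)).mono fun ε ⟨hxε, hρε, hCρ⟩ => ⟨hρε, ?_⟩
  rw [Real.rpow_natCast] at hxε
  calc C * |x ε| ≤ |C| * ρ ε ^ (m + 1) := by gcongr; exact le_abs_self C
    _ = |C| * ρ ε * ρ ε ^ m := by ring
    _ < 1 * ρ ε ^ m := by gcongr; exact pow_pos hρε.1 m
    _ = ρ ε ^ m := one_mul _

theorem exists_bounded_kernel_of_not_rInv_det {ι : Type*} [Fintype ι] [DecidableEq ι]
    (hρ0 : Tendsto ρ (𝓝[>] 0) (𝓝 0)) (A : ℝ → Matrix ι ι ℝ) (hA : ¬ RInv ρ fun ε => (A ε).det) :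
    ∃ ξ : ℝ → ι → ℝ, (∀ ε, ‖ξ ε‖ ≤ 1) ∧ (¬ ∀ i, RNegl ρ fun ε => ξ ε i) ∧
      ∀ i, RNegl ρ fun ε => (A ε *ᵥ ξ ε) i := by
  set N := Fintype.card ι
  have hfreq (k : ℕ) : ∃ᶠ ε in 𝓝[>] (0:ℝ),
      ρ ε ∈ Ioc 0 1 ∧ N ! * |(A ε).det| < (ρ ε ^ (k + 1)) ^ N := by
    simpa only [pow_mul] using frequently_mul_abs_lt_pow_of_not_rInv hρ hρ0 hA (N !) ((k + 1) * N)
  obtain ⟨t, htpos, ht, hP⟩ := exists_seq_tendsto_nhdsGT_forall_of_frequently hfreq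
  choose v hv hAv using fun k =>
    exists_norm_eq_one_norm_mulVec_lt (A (t k)) (pow_pos (hP k).1.1 (k + 1)) (hP k).2
  classical
  let ξ : ℝ → ι → ℝ := fun ε => if h : ∃ k, t k = ε then v h.choose else 0
  have hξt : ∀ k, ‖ξ (t k)‖ = 1 := fun k => by simp [ξ, hv]
  refine ⟨ξ, fun ε => ?_, not_forall_rNegl_of_norm_eq_one hρ0 ht hξt,
    fun i => RNegl.of_forall_nat hρ fun K => ?_⟩
  · unfold ξ; split_ifs <;> simp [hv]
  have hlt : ∀ᶠ ε in 𝓝[>] (0:ℝ), ∀ k ∈ Finset.range K, ε < t k :=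
    (eventually_all_finset _).2 fun k _ =>
      (eventually_lt_nhds (htpos k)).filter_mono nhdsWithin_le_nhds
  filter_upwards [hlt, hρ] with ε hε hρε
  by_cases h : ∃ k, t k = ε
  · obtain ⟨k, rfl, hξε⟩ : ∃ k, t k = ε ∧ ξ ε = v k := ⟨h.choose, h.choose_spec, dif_pos h⟩
    have hK : K ≤ k := not_lt.1 fun hk => (hε k (Finset.mem_range.2 hk)).false
    rw [hξε]
    calc |(A (t k) *ᵥ v k) i| ≤ ‖A (t k) *ᵥ v k‖ := norm_le_pi_norm (A (t k) *ᵥ v k) i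
      _ ≤ ρ (t k) ^ (k + 1) := (hAv k).le
      _ ≤ ρ (t k) ^ K := pow_le_pow_of_le_one hρε.1.le hρε.2 (by omega)
  · simp [ξ, dif_neg h, pow_nonneg hρε.1.le]

end Nets

section SubringOfFunctions

variable {X R : Type*} [CommRing R] {S : Subring (X → R)} {m n : Type*} [Fintype n]

theorem Subring.coe_mulVec_apply (M : Matrix m n S) (v : n → S) (i : m) :
    ((M *ᵥ v) i : X → R) = fun x => ∑ j, (M i j : X → R) x * (v j : X → R) x := by
  ext x; simp [mulVec, dotProduct]

theorem Subring.coe_dotProduct_mulVec [Fintype m] (M : Matrix m n S) (v : m → S) (w : n → S) :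
    ((v ⬝ᵥ M *ᵥ w : S) : X → R) =
      fun x => ∑ i, ∑ j, (v i : X → R) x * (M i j : X → R) x * (w j : X → R) x := by
  ext x; simp [mulVec, dotProduct, Finset.mul_sum, mul_assoc]

theorem Subring.coe_det [DecidableEq n] (M : Matrix n n S) :
    (M.det : X → R) = fun x => (M.map fun f => (f : X → R) x).det :=
  funext fun x => ((Pi.evalRingHom _ x).comp S.subtype).map_det M

end SubringOfFunctions

namespace RobinsonColombeau

variable {ρ : ℝ → ℝ} (hρ : ∀ᶠ ε in 𝓝[>] (0:ℝ), ρ ε ∈ Ioc 0 1)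

def moderateNets : Subring (ℝ → ℝ) where
  carrier := {x | RMod ρ x}
  mul_mem' := RMod.mul hρ
  one_mem' := RMod.of_bounded hρ (C := 1) fun _ => by simp
  add_mem' := RMod.add hρ
  zero_mem' := RMod.zero
  neg_mem' := RMod.neg

def negligibleNets : Ideal (moderateNets hρ) where
  carrier := {x | RNegl ρ x}
  add_mem' := RNegl.add
  zero_mem' := RNegl.zero
  smul_mem' c _ hx := RMod.mul_rNegl hρ c.2 hx

/-- The ring `ρ-ℝ̃` of generalized numbers. -/
abbrev GenNum := moderateNets hρ ⧸ negligibleNets hρ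

local notation "π" => Ideal.Quotient.mk (negligibleNets hρ)

theorem mk_eq_mk_iff {x y : moderateNets hρ} : π x = π y ↔ RNegl ρ (x - y : ℝ → ℝ) :=
  Ideal.Quotient.eq

theorem mk_eq_zero_iff {x : moderateNets hρ} : π x = 0 ↔ RNegl ρ x :=
  Ideal.Quotient.eq_zero_iff_mem

theorem isUnit_mk_iff {x : moderateNets hρ} : IsUnit (π x) ↔ RInv ρ x := by
  constructor
  · intro hx
    obtain ⟨u, hu⟩ := hx.exists_right_inv
    obtain ⟨y, rfl⟩ := Ideal.Quotient.mk_surjective u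
    exact ⟨y, y.2, (mk_eq_mk_iff hρ (x := x * y) (y := 1)).1 (by rw [map_mul, hu, map_one])⟩
  · rintro ⟨y, hy, hxy⟩
    exact .of_mul_eq_one (π ⟨y, hy⟩) <| by
      rw [← map_mul, ← map_one π]; exact (mk_eq_mk_iff hρ).2 hxy

section GenNumMatrix

variable {ι : Type*} [Fintype ι] [DecidableEq ι] (hρ0 : Tendsto ρ (𝓝[>] 0) (𝓝 0))
include hρ0

theorem exists_mulVec_eq_zero_of_not_isUnit_det (M : Matrix ι ι (GenNum hρ))
    (hM : ¬ IsUnit M.det) : ∃ v ≠ 0, M *ᵥ v = 0 := by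
  obtain ⟨M, rfl⟩ : ∃ M' : Matrix ι ι (moderateNets hρ), M'.map π = M :=
    ⟨M.map (Function.surjInv Ideal.Quotient.mk_surjective), by
      ext; simp [Function.surjInv_eq]⟩
  rw [← RingHom.mapMatrix_apply, ← RingHom.map_det, isUnit_mk_iff, Subring.coe_det] at hM
  obtain ⟨ξ, hξ1, hξ, hMξ⟩ := exists_bounded_kernel_of_not_rInv_det hρ hρ0 _ hM
  let ξ' : ι → moderateNets hρ := fun i =>
    ⟨fun ε => ξ ε i, RMod.of_bounded hρ fun ε => (norm_le_pi_norm (ξ ε) i).trans (hξ1 ε)⟩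
  refine ⟨π ∘ ξ', fun h => hξ fun i => (mk_eq_zero_iff hρ).1 (congr_fun h i), funext fun i => ?_⟩
  rw [Pi.zero_apply, ← RingHom.map_mulVec, mk_eq_zero_iff, Subring.coe_mulVec_apply]
  exact hMξ i

theorem separatingRight_iff_isUnit_det (M : Matrix ι ι (GenNum hρ)) :
    M.SeparatingRight ↔ IsUnit M.det := by
  refine ⟨fun hM => ?_, fun h => (Nondegenerate.of_det_mem_nonZeroDivisors
    h.mem_nonZeroDivisors).separatingRight⟩
  by_contra h
  obtain ⟨v, hv, hMv⟩ := exists_mulVec_eq_zero_of_not_isUnit_det hρ hρ0 M h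
  exact hv (hM.eq_zero_of_mulVec_eq_zero hMv)

theorem separatingLeft_iff_isUnit_det (M : Matrix ι ι (GenNum hρ)) :
    M.SeparatingLeft ↔ IsUnit M.det := by
  rw [← separatingRight_transpose_iff, separatingRight_iff_isUnit_det hρ hρ0, det_transpose]

theorem mulVec_injective_iff_isUnit_det (M : Matrix ι ι (GenNum hρ)) :
    Function.Injective M.mulVec ↔ IsUnit M.det := by
  refine ⟨fun h => (separatingRight_iff_isUnit_det hρ hρ0 M).1 ?_,
    fun h => mulVec_injective_of_isUnit ((isUnit_iff_isUnit_det M).2 h)⟩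
  exact separatingRight_iff_forall_mulVec_eq_zero.2 fun v hv => h (hv.trans (mulVec_zero M).symm)

end GenNumMatrix

section Representatives

variable {n : ℕ} (A : Fin n → Fin n → ℝ → ℝ) (hA : ∀ i j, RMod ρ (A i j))

def netMatrix : Matrix (Fin n) (Fin n) (moderateNets hρ) := of fun i j => ⟨A i j, hA i j⟩

theorem map_mk_mulVec (ξ : Fin n → moderateNets hρ) :
    (netMatrix hρ A hA).map π *ᵥ (π ∘ ξ) = π ∘ (netMatrix hρ A hA *ᵥ ξ) :=
  funext fun i => (RingHom.map_mulVec π _ ξ i).symm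

theorem mk_comp_eq_mk_comp_iff (ξ η : Fin n → moderateNets hρ) :
    π ∘ ξ = π ∘ η ↔ VecNegl n ρ fun i => ξ i - η i := by
  simp only [funext_iff, Function.comp_apply, mk_eq_mk_iff]; rfl

theorem forall_rep_separatingLeft_iff :
    (∀ ξ : Fin n → ℝ → ℝ, VecMod n ρ ξ →
        (∀ η : Fin n → ℝ → ℝ, VecMod n ρ η →
          RNegl ρ (fun ε => ∑ i, ∑ j, ξ i ε * A i j ε * η j ε)) →
        VecNegl n ρ ξ) ↔ ((netMatrix hρ A hA).map π).SeparatingLeft := by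
  have key : ∀ ξ η : Fin n → moderateNets hρ,
      (π ∘ ξ) ⬝ᵥ ((netMatrix hρ A hA).map π *ᵥ (π ∘ η)) = 0 ↔
        RNegl ρ (fun ε => ∑ i, ∑ j, (ξ i : ℝ → ℝ) ε * A i j ε * (η j : ℝ → ℝ) ε) := fun ξ η => by
    rw [map_mk_mulVec, ← RingHom.map_dotProduct, mk_eq_zero_iff, Subring.coe_dotProduct_mulVec]
    rfl
  rw [separatingLeft_def]
  constructor
  · intro h u hu
    obtain ⟨ξ, rfl⟩ := Ideal.Quotient.mk_surjective.comp_left u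
    exact funext fun i => (mk_eq_zero_iff hρ).2 <| h _ (fun i => (ξ i).2)
      (fun η hη => (key ξ _).1 (hu (π ∘ fun j => ⟨η j, hη j⟩))) i
  · intro h ξ hξ hξA i
    refine (mk_eq_zero_iff hρ (x := ⟨ξ i, hξ i⟩)).1
      (congr_fun (h (π ∘ fun j => ⟨ξ j, hξ j⟩) fun w => ?_) i)
    obtain ⟨η, rfl⟩ := Ideal.Quotient.mk_surjective.comp_left w
    exact (key _ η).2 (hξA _ fun j => (η j).2)

theorem forall_rep_injective_iff :
    (∀ ξ ξ' : Fin n → ℝ → ℝ, VecMod n ρ ξ → VecMod n ρ ξ' →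
        (∀ i, RNegl ρ (fun ε => (∑ j, A i j ε * ξ j ε) - ∑ j, A i j ε * ξ' j ε)) →
        VecNegl n ρ (fun i => ξ i - ξ' i)) ↔
      Function.Injective ((netMatrix hρ A hA).map π).mulVec := by
  have key : ∀ ξ ξ' : Fin n → moderateNets hρ,
      (netMatrix hρ A hA).map π *ᵥ (π ∘ ξ) = (netMatrix hρ A hA).map π *ᵥ (π ∘ ξ') ↔
        ∀ i, RNegl ρ (fun ε => (∑ j, A i j ε * (ξ j : ℝ → ℝ) ε) -
          ∑ j, A i j ε * (ξ' j : ℝ → ℝ) ε) := fun ξ ξ' => by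
    simp only [map_mk_mulVec, funext_iff, Function.comp_apply, mk_eq_mk_iff,
      Subring.coe_mulVec_apply]
    rfl
  constructor
  · intro h u u' huu'
    obtain ⟨ξ, rfl⟩ := Ideal.Quotient.mk_surjective.comp_left u
    obtain ⟨ξ', rfl⟩ := Ideal.Quotient.mk_surjective.comp_left u'
    exact (mk_comp_eq_mk_comp_iff hρ ξ ξ').2
      (h _ _ (fun i => (ξ i).2) (fun i => (ξ' i).2) ((key ξ ξ').1 huu'))
  · intro h ξ ξ' hξ hξ' hAξ
    exact (mk_comp_eq_mk_comp_iff hρ (fun i => ⟨ξ i, hξ i⟩) (fun i => ⟨ξ' i, hξ' i⟩)).1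
      (h ((key _ _).2 hAξ))

theorem forall_rep_surjective_iff :
    (∀ η : Fin n → ℝ → ℝ, VecMod n ρ η →
        ∃ ξ : Fin n → ℝ → ℝ, VecMod n ρ ξ ∧
          ∀ i, RNegl ρ (fun ε => (∑ j, A i j ε * ξ j ε) - η i ε)) ↔
      Function.Surjective ((netMatrix hρ A hA).map π).mulVec := by
  have key : ∀ ξ η : Fin n → moderateNets hρ,
      (netMatrix hρ A hA).map π *ᵥ (π ∘ ξ) = π ∘ η ↔
        ∀ i, RNegl ρ (fun ε => (∑ j, A i j ε * (ξ j : ℝ → ℝ) ε) - (η i : ℝ → ℝ) ε) :=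
      fun ξ η => by
    simp only [map_mk_mulVec, funext_iff, Function.comp_apply, mk_eq_mk_iff,
      Subring.coe_mulVec_apply]
    rfl
  constructor
  · intro h u
    obtain ⟨η, rfl⟩ := Ideal.Quotient.mk_surjective.comp_left u
    obtain ⟨ξ, hξ, hAξ⟩ := h _ fun i => (η i).2
    exact ⟨π ∘ fun i => ⟨ξ i, hξ i⟩, (key _ η).2 hAξ⟩
  · intro h η hη
    obtain ⟨u, hu⟩ := h (π ∘ fun i => ⟨η i, hη i⟩)
    obtain ⟨ξ, rfl⟩ := Ideal.Quotient.mk_surjective.comp_left u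
    exact ⟨_, fun i => (ξ i).2, (key ξ _).1 hu⟩

theorem rInv_det_iff :
    RInv ρ (fun ε => Matrix.det (Matrix.of fun i j => A i j ε)) ↔
      IsUnit ((netMatrix hρ A hA).map π).det := by
  rw [← RingHom.mapMatrix_apply, ← RingHom.map_det, isUnit_mk_iff, Subring.coe_det]
  rfl

end Representatives

end RobinsonColombeau

/-- For an `n×n` matrix `A` over `ρ-ℝ̃` the following are equivalent:
(1) `A` is nondegenerate (`ξᵗAη = 0` for all `η` implies `ξ = 0`);
(2) `A : ρ-ℝ̃^n → ρ-ℝ̃^n` is injective;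
(3) `A : ρ-ℝ̃^n → ρ-ℝ̃^n` is surjective;
(4) `det A` is invertible in `ρ-ℝ̃`.
Everything is expressed via (ρ-moderate) representatives, with equality in `ρ-ℝ̃` meaning
negligibility of the difference. -/
theorem matrix_nondegenerate_tfae (n : ℕ) (ρ : ℝ → ℝ)
    (hρpos : ∀ ε ∈ Set.Ioc (0:ℝ) 1, 0 < ρ ε)
    (hρ0 : Tendsto ρ (𝓝[>] (0:ℝ)) (𝓝 0))
    (A : Fin n → Fin n → ℝ → ℝ) (hA : ∀ i j, RMod ρ (A i j)) :
    -- (1) nondegenerate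
    ((∀ ξ : Fin n → ℝ → ℝ, VecMod n ρ ξ →
        (∀ η : Fin n → ℝ → ℝ, VecMod n ρ η →
          RNegl ρ (fun ε => ∑ i, ∑ j, ξ i ε * A i j ε * η j ε)) →
        VecNegl n ρ ξ) ↔
    -- (2) injective
      (∀ ξ ξ' : Fin n → ℝ → ℝ, VecMod n ρ ξ → VecMod n ρ ξ' →
        (∀ i, RNegl ρ (fun ε => (∑ j, A i j ε * ξ j ε) - ∑ j, A i j ε * ξ' j ε)) →
        VecNegl n ρ (fun i => ξ i - ξ' i))) ∧
    -- (2) ↔ (3) surjective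
    ((∀ ξ ξ' : Fin n → ℝ → ℝ, VecMod n ρ ξ → VecMod n ρ ξ' →
        (∀ i, RNegl ρ (fun ε => (∑ j, A i j ε * ξ j ε) - ∑ j, A i j ε * ξ' j ε)) →
        VecNegl n ρ (fun i => ξ i - ξ' i)) ↔
      (∀ η : Fin n → ℝ → ℝ, VecMod n ρ η →
        ∃ ξ : Fin n → ℝ → ℝ, VecMod n ρ ξ ∧
          ∀ i, RNegl ρ (fun ε => (∑ j, A i j ε * ξ j ε) - η i ε))) ∧
    -- (3) ↔ (4) det invertible
    ((∀ η : Fin n → ℝ → ℝ, VecMod n ρ η →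
        ∃ ξ : Fin n → ℝ → ℝ, VecMod n ρ ξ ∧
          ∀ i, RNegl ρ (fun ε => (∑ j, A i j ε * ξ j ε) - η i ε)) ↔
      RInv ρ (fun ε => Matrix.det (Matrix.of fun i j => A i j ε))) := by
  have hρ : ∀ᶠ ε in 𝓝[>] (0:ℝ), ρ ε ∈ Ioc 0 1 := by
    filter_upwards [Ioc_mem_nhdsGT (zero_lt_one' ℝ),
      hρ0.eventually (eventually_le_nhds zero_lt_one)] with ε hε hle using ⟨hρpos ε hε, hle⟩
  open RobinsonColombeau in
  rw [forall_rep_separatingLeft_iff hρ A hA, forall_rep_injective_iff hρ A hA,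
    forall_rep_surjective_iff hρ A hA, rInv_det_iff hρ A hA, separatingLeft_iff_isUnit_det hρ hρ0,
    mulVec_injective_iff_isUnit_det hρ hρ0, mulVec_surjective_iff_isUnit, isUnit_iff_isUnit_det]
  exact ⟨Iff.rfl, Iff.rfl, Iff.rfl⟩
end
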